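/- (Negative witness of the span program of Theorem 3.1.) Let 𝒯 be a binary decision tree with a G-coloring, read-once along paths, with positive weights W_black, W_red. For x ∈ {0,1}^n let P_x be its computation path, leaf(x) its endpoint, T_x the length of P_x and G_x the number of red edges on P_x, and let w̄_x = Σ_{v ∈ P_x} e_v ∈ ℂ^{V(𝒯)}. Then: (a) w̄_x is orthogonal to every input vector that is available for x; (b) ⟨e_r − e_u, w̄_x⟩ = 1 for every leaf u ≠ leaf(x), where r is the root, while ⟨e_r − e_{leaf(x)}, w̄_x⟩ = 0; and (c) ‖A†·w̄_x‖² ≤ W_black·G_x + W_red·T_x, where A† denotes the conjugate transpose of A. -/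

import Mathlib

open scoped InnerProductSpace

/-- A binary decision tree with input length `n`, with a coloring of its edges
(`true` = black, `false` = red): at `node J color child`, `J` is the query index,
`color q` the color of the outgoing edge labeled `q`, and `child q` the corresponding
child. -/
inductive BDT (n : ℕ) : Type where
  | leaf : BDT n
  | node (J : Fin n) (color : Bool → Bool) (child : Bool → BDT n) : BDT n

namespace BDT

variable {n : ℕ}

/-- G-coloring condition: every internal vertex has at most one black (`true`)
outgoing edge. -/
def ColorWF : BDT n → Prop
  | .leaf => True
  | .node _ color child =>
      ¬(color false = true ∧ color true = true) ∧ ∀ q, ColorWF (child q)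

/-- `t.ReadOnceFrom s`: no query index of `s` occurs in `t` and no query index is used
twice along a root-to-leaf path of `t`. -/
def ReadOnceFrom : BDT n → Finset (Fin n) → Prop
  | .leaf, _ => True
  | .node J _ child, s => J ∉ s ∧ ∀ q, ReadOnceFrom (child q) (insert J s)

/-- The tree is read-once along paths. -/
def ReadOnce (t : BDT n) : Prop := t.ReadOnceFrom ∅

/-- The vertex set `V(𝒯)`: vertices are identified with their addresses, i.e. the lists
of edge labels leading to them from the root `[]`. -/
def verts : BDT n → Finset (List Bool)
  | .leaf => {[]}
  | .node _ _ child =>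
      insert [] ((verts (child false)).image (false :: ·) ∪
        (verts (child true)).image (true :: ·))

/-- The set of (addresses of) internal vertices. -/
def internals : BDT n → Finset (List Bool)
  | .leaf => ∅
  | .node _ _ child =>
      insert [] ((internals (child false)).image (false :: ·) ∪
        (internals (child true)).image (true :: ·))

/-- The set of (addresses of) leaves. -/
def leaves : BDT n → Finset (List Bool)
  | .leaf => {[]}
  | .node _ _ child =>
      (leaves (child false)).image (false :: ·) ∪ (leaves (child true)).image (true :: ·)

/-- The query index at the vertex with address `v` (`none` if `v` is a leaf). -/
def queryAt : BDT n → List Bool → Option (Fin n)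
  | .leaf, _ => none
  | .node J _ _, [] => some J
  | .node _ _ child, q :: v => queryAt (child q) v

/-- `colorAt t v q` is the color `C(v, q)` of the outgoing edge of the vertex at address
`v` labeled `q` (junk value `true` if `v` is not an internal vertex). -/
def colorAt : BDT n → List Bool → Bool → Bool
  | .leaf, _, _ => true
  | .node _ color _, [], q => color q
  | .node _ _ child, p :: v, q => colorAt (child p) v q

/-- The address of the leaf reached by the computation path `P_x`. -/
def leafAddr : BDT n → (Fin n → Bool) → List Bool
  | .leaf, _ => []
  | .node J _ child, x => x J :: leafAddr (child (x J)) x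

/-- The list of addresses of the internal vertices on the computation path `P_x`. -/
def pathInternals : BDT n → (Fin n → Bool) → List (List Bool)
  | .leaf, _ => []
  | .node J _ child, x => [] :: (pathInternals (child (x J)) x).map (x J :: ·)

/-- The list of colors of the edges of the computation path `P_x`. -/
def pathColors : BDT n → (Fin n → Bool) → List Bool
  | .leaf, _ => []
  | .node J color child, x => color (x J) :: pathColors (child (x J)) x

/-- The standard basis vector `e_v` of `ℂ^{V(𝒯)}` (zero if `v` is not a vertex). -/
noncomputable def evec (t : BDT n) (v : List Bool) :
    EuclideanSpace ℂ {u // u ∈ t.verts} :=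
  if h : v ∈ t.verts then EuclideanSpace.single ⟨v, h⟩ 1 else 0

/-- The input vector `√(W_{C(v,q)})·(e_v − e_{N(v,q)})` of the edge `(v, N(v,q))`, with
weights `W : Bool → ℝ` (`W true = W_black`, `W false = W_red`). -/
noncomputable def inputVec (t : BDT n) (W : Bool → ℝ) (v : List Bool) (q : Bool) :
    EuclideanSpace ℂ {u // u ∈ t.verts} :=
  ((Real.sqrt (W (t.colorAt v q)) : ℝ) : ℂ) • (t.evec v - t.evec (v ++ [q]))

/-- The matrix `A : ℂ^{E(𝒯)} → ℂ^{V(𝒯)}` whose column at the edge `(v, N(v,q))` is the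
input vector of that edge. -/
noncomputable def spanMatrix (t : BDT n) (W : Bool → ℝ) :
    Matrix {u // u ∈ t.verts} ({v // v ∈ t.internals} × Bool) ℂ :=
  Matrix.of fun u e => t.inputVec W e.1.1 e.2 u

end BDT

/-!
The vertices of `P_x` are exactly the prefixes of the address of `leaf(x)`, so `w̄_x` is their
indicator vector and `⟪e_u, w̄_x⟫ = [u ∈ P_x]`. An available edge has both ends on `P_x` or
both off it, which gives (a); a leaf lies on `P_x` only if it is `leaf(x)`, which gives (b).
The coordinate of `A†·w̄_x` at an edge `(v, N(v,q))` is `√W_{C(v,q)}·([v ∈ P_x] − [N(v,q) ∈ P_x])`,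
so `‖A†·w̄_x‖²` is the total weight of the edges leaving `P_x`, one per internal vertex of the
path. By the G-coloring, such an edge is black only if the path edge beside it is red, whence
each of them weighs at most `W_red` plus `W_black` if the path edge is red.
-/

theorem List.nodup_inits {α : Type*} : ∀ l : List α, l.inits.Nodup
  | [] => by simp
  | a :: l => by
      rw [List.inits_cons, List.nodup_cons]
      exact ⟨by simp, (List.nodup_inits l).map fun _ _ h => by injection h⟩

namespace BDT

variable {n : ℕ}

theorem sum_internals_node {M : Type*} [AddCommMonoid M] (J : Fin n) (c : Bool → Bool)
    (ch : Bool → BDT n) (f : List Bool → M) :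
    ∑ v ∈ (node J c ch).internals, f v
      = f [] + ∑ b : Bool, ∑ v ∈ (ch b).internals, f (b :: v) := by
  have hinj : ∀ b : Bool, Function.Injective (List.cons b) := fun _ _ _ h => by injection h
  rw [internals, Finset.sum_insert (by simp), Finset.sum_union, Finset.sum_image,
    Finset.sum_image, Fintype.sum_bool, add_comm (∑ v ∈ _, _)]
  · exact fun _ _ _ _ h => hinj true h
  · exact fun _ _ _ _ h => hinj false h
  · simp [Finset.disjoint_left]

theorem mem_verts_of_prefix_leafAddr :
    ∀ {t : BDT n} {x : Fin n → Bool} {u : List Bool}, u <+: t.leafAddr x → u ∈ t.verts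
  | .leaf, _, _, h => by simp_all [leafAddr, verts]
  | .node _ _ _, _, [], _ => by simp [verts]
  | .node J _ ch, x, q :: u, h => by
      rw [leafAddr, List.cons_prefix_cons] at h
      obtain ⟨rfl, h⟩ := h
      have := mem_verts_of_prefix_leafAddr h
      cases hq : x J <;> rw [hq] at this <;> simp [verts, this]

theorem pathInternals_append_leafAddr : ∀ (t : BDT n) (x : Fin n → Bool),
    t.pathInternals x ++ [t.leafAddr x] = (t.leafAddr x).inits
  | .leaf, _ => rfl
  | .node J _ ch, x => by
      simp [pathInternals, leafAddr, ← pathInternals_append_leafAddr (ch (x J)) x]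

theorem prefix_leafAddr_append_of_queryAt :
    ∀ {t : BDT n} {x : Fin n → Bool} {v : List Bool} {J : Fin n},
      t.queryAt v = some J → v <+: t.leafAddr x → v ++ [x J] <+: t.leafAddr x
  | .leaf, _, _, _, h, _ => by simp [queryAt] at h
  | .node _ _ _, _, [], _, h, _ => by
      obtain rfl := Option.some_inj.mp h
      exact ⟨_, rfl⟩
  | .node J _ ch, x, q :: v, _, h, hp => by
      rw [leafAddr, List.cons_prefix_cons] at hp
      obtain ⟨rfl, hp⟩ := hp
      rw [leafAddr, List.cons_append, List.cons_prefix_cons]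
      exact ⟨rfl, prefix_leafAddr_append_of_queryAt h hp⟩

theorem eq_leafAddr_of_mem_leaves_of_prefix :
    ∀ {t : BDT n} {x : Fin n → Bool} {u : List Bool},
      u ∈ t.leaves → u <+: t.leafAddr x → u = t.leafAddr x
  | .leaf, _, _, hu, _ => by simpa [leaves, leafAddr] using hu
  | .node J _ ch, x, _, hu, hp => by
      simp only [leaves, Finset.mem_union, Finset.mem_image] at hu
      rw [leafAddr] at hp ⊢
      obtain ⟨u, hu, rfl⟩ | ⟨u, hu, rfl⟩ := hu <;>
      · obtain ⟨hq, hp⟩ := List.cons_prefix_cons.mp hp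
        rw [hq] at hu ⊢
        rw [eq_leafAddr_of_mem_leaves_of_prefix hu hp]

theorem inner_evec_evec (t : BDT n) (u v : List Bool) :
    ⟪t.evec u, t.evec v⟫_ℂ = if u = v then (if u ∈ t.verts then 1 else 0) else 0 := by
  unfold evec
  split_ifs <;> subst_vars <;> simp_all [EuclideanSpace.inner_single_left]

/-- The vector `w̄_x = ∑_{v ∈ P_x} e_v`. -/
noncomputable def pathVec (t : BDT n) (x : Fin n → Bool) :
    EuclideanSpace ℂ {u // u ∈ t.verts} :=
  ((t.pathInternals x).map t.evec).sum + t.evec (t.leafAddr x)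

theorem pathVec_eq_sum_inits (t : BDT n) (x : Fin n → Bool) :
    t.pathVec x = ∑ v ∈ (t.leafAddr x).inits.toFinset, t.evec v := by
  rw [List.sum_toFinset _ (List.nodup_inits _), ← pathInternals_append_leafAddr]
  simp [pathVec]

theorem inner_evec_pathVec (t : BDT n) (x : Fin n → Bool) (u : List Bool) :
    ⟪t.evec u, t.pathVec x⟫_ℂ = if u <+: t.leafAddr x then 1 else 0 := by
  rw [pathVec_eq_sum_inits, inner_sum]
  simp_rw [inner_evec_evec]
  simp only [Finset.sum_ite_eq, List.mem_toFinset, List.mem_inits]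
  by_cases h : u <+: t.leafAddr x
  · simp [h, mem_verts_of_prefix_leafAddr h]
  · simp [h]

theorem inner_inputVec_pathVec (t : BDT n) (W : Bool → ℝ) (x : Fin n → Bool)
    (v : List Bool) (q : Bool) :
    ⟪t.inputVec W v q, t.pathVec x⟫_ℂ
      = (Real.sqrt (W (t.colorAt v q)) : ℂ) *
        ((if v <+: t.leafAddr x then 1 else 0) - (if v ++ [q] <+: t.leafAddr x then 1 else 0)) := by
  rw [inputVec, inner_smul_left, inner_sub_left, inner_evec_pathVec, inner_evec_pathVec,
    Complex.conj_ofReal]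

theorem conjTranspose_spanMatrix_mulVec (t : BDT n) (W : Bool → ℝ)
    (w : EuclideanSpace ℂ {u // u ∈ t.verts}) (e : {v // v ∈ t.internals} × Bool) :
    (t.spanMatrix W).conjTranspose.mulVec (fun u => w u) e = ⟪t.inputVec W e.1.1 e.2, w⟫_ℂ := by
  simp only [PiLp.inner_apply, Matrix.mulVec, dotProduct, Matrix.conjTranspose_apply,
    spanMatrix, Matrix.of_apply, RCLike.inner_apply, RCLike.star_def, mul_comm]

theorem norm_inner_inputVec_pathVec_sq (t : BDT n) {W : Bool → ℝ} (hW : ∀ b, 0 ≤ W b)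
    (x : Fin n → Bool) (v : List Bool) (q : Bool) :
    ‖⟪t.inputVec W v q, t.pathVec x⟫_ℂ‖ ^ 2
      = if v <+: t.leafAddr x ∧ ¬ v ++ [q] <+: t.leafAddr x then W (t.colorAt v q) else 0 := by
  rw [inner_inputVec_pathVec]
  by_cases hvq : v ++ [q] <+: t.leafAddr x
  · simp [hvq, (v.prefix_append [q]).trans hvq]
  · by_cases hv : v <+: t.leafAddr x
    · simp [hv, hvq, Complex.norm_real, Real.sq_sqrt (hW _)]
    · simp [hv, hvq]

/-- The total weight `∑_{v ∈ P_x internal} W_{C(v, ¬x_{J(v)})}` of the edges leaving `P_x`. -/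
noncomputable def offPathWeight (W : Bool → ℝ) : BDT n → (Fin n → Bool) → ℝ
  | .leaf, _ => 0
  | .node J color child, x => W (color (!x J)) + offPathWeight W (child (x J)) x

theorem sum_internals_offPath_eq (W : Bool → ℝ) : ∀ (t : BDT n) (x : Fin n → Bool),
    ∑ v ∈ t.internals, ∑ q : Bool,
        (if v <+: t.leafAddr x ∧ ¬ v ++ [q] <+: t.leafAddr x then W (t.colorAt v q) else 0)
      = offPathWeight W t x
  | .leaf, _ => by simp [internals, offPathWeight]
  | .node J c ch, x => by
      rw [sum_internals_node, offPathWeight, ← sum_internals_offPath_eq W (ch (x J)) x]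
      congr 1
      · cases h : x J <;> simp [leafAddr, colorAt, h]
      · rw [Fintype.sum_eq_single (x J)]
        · simp [leafAddr, colorAt]
        · intro b hb
          simp [leafAddr, hb]

theorem offPathWeight_le {W : Bool → ℝ} (hW : ∀ b, 0 ≤ W b) :
    ∀ {t : BDT n}, t.ColorWF → ∀ x : Fin n → Bool,
      offPathWeight W t x
        ≤ W true * ((t.pathColors x).count false : ℝ) + W false * ((t.leafAddr x).length : ℝ)
  | .leaf, _, _ => by simp [offPathWeight, pathColors, leafAddr]
  | .node J c ch, ⟨hc, hch⟩, x => by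
      have ih := offPathWeight_le hW (hch (x J)) x
      -- at most one outgoing edge is black, so a black edge leaving the path follows a red one on it
      have hvertex : W (c (!x J)) ≤ W true * (if c (x J) == false then 1 else 0) + W false := by
        have := hW true; have := hW false
        cases h : x J <;> cases h1 : c true <;> cases h0 : c false <;> simp_all
      rw [offPathWeight, pathColors, leafAddr, List.count_cons, List.length_cons]
      push_cast
      linear_combination hvertex + ih

theorem sum_norm_conjTranspose_spanMatrix_mulVec_pathVec_sq (t : BDT n) {W : Bool → ℝ}
    (hW : ∀ b, 0 ≤ W b) (x : Fin n → Bool) :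
    ∑ e : {v // v ∈ t.internals} × Bool,
        ‖(t.spanMatrix W).conjTranspose.mulVec (fun u => t.pathVec x u) e‖ ^ 2
      = offPathWeight W t x := by
  rw [← sum_internals_offPath_eq W t x, ← Finset.sum_coe_sort t.internals, Fintype.sum_prod_type]
  simp_rw [conjTranspose_spanMatrix_mulVec, norm_inner_inputVec_pathVec_sq t hW]

end BDT

theorem stmt8_general {n : ℕ} (t : BDT n) (hcol : t.ColorWF)
    (W : Bool → ℝ) (hWblack : 0 < W true) (hWred : 0 < W false)
    (x : Fin n → Bool)
    (wbar : EuclideanSpace ℂ {u // u ∈ t.verts})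
    (hwbar : wbar = ((t.pathInternals x).map t.evec).sum + t.evec (t.leafAddr x)) :
    (∀ v ∈ t.internals, ∀ J, t.queryAt v = some J →
        ⟪t.inputVec W v (x J), wbar⟫_ℂ = 0) ∧
    (∀ u ∈ t.leaves, u ≠ t.leafAddr x → ⟪t.evec [] - t.evec u, wbar⟫_ℂ = 1) ∧
    ⟪t.evec [] - t.evec (t.leafAddr x), wbar⟫_ℂ = 0 ∧
    ∑ e : {v // v ∈ t.internals} × Bool,
        ‖(t.spanMatrix W).conjTranspose.mulVec (fun u => wbar u) e‖ ^ 2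
      ≤ W true * ((t.pathColors x).count false : ℝ)
        + W false * ((t.leafAddr x).length : ℝ) := by
  obtain rfl : wbar = t.pathVec x := hwbar
  have hW : ∀ b, 0 ≤ W b := fun b => b.casesOn hWred.le hWblack.le
  refine ⟨fun v _ J hJ => ?_, fun u hu hne => ?_, ?_, ?_⟩
  · have hstep : v <+: t.leafAddr x ↔ v ++ [x J] <+: t.leafAddr x :=
      ⟨BDT.prefix_leafAddr_append_of_queryAt hJ, (v.prefix_append _).trans⟩
    simp only [BDT.inner_inputVec_pathVec, ← hstep, sub_self, mul_zero]
  · rw [inner_sub_left, BDT.inner_evec_pathVec, BDT.inner_evec_pathVec, if_pos List.nil_prefix,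
      if_neg (hne ∘ BDT.eq_leafAddr_of_mem_leaves_of_prefix hu), sub_zero]
  · rw [inner_sub_left, BDT.inner_evec_pathVec, BDT.inner_evec_pathVec, if_pos List.nil_prefix,
      if_pos (List.prefix_refl _), sub_self]
  · rw [BDT.sum_norm_conjTranspose_spanMatrix_mulVec_pathVec_sq t hW]
    exact BDT.offPathWeight_le hW hcol x

/-- **Negative witness of the span program of Theorem 3.1.**  Let
`w̄_x = Σ_{v ∈ P_x} e_v ∈ ℂ^{V(𝒯)}` (sum over all vertices of the computation path `P_x`,
internal vertices and the leaf).  Then (a) `w̄_x` is orthogonal to every input vector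
available for `x`; (b) `⟨e_root − e_u, w̄_x⟩ = 1` for every leaf `u ≠ leaf(x)`, while
`⟨e_root − e_{leaf(x)}, w̄_x⟩ = 0`; and (c)
`‖A†·w̄_x‖² ≤ W_black·G_x + W_red·T_x`. -/
theorem stmt8 {n : ℕ} (t : BDT n) (hcol : t.ColorWF) (hro : t.ReadOnce)
    (W : Bool → ℝ) (hWblack : 0 < W true) (hWred : 0 < W false)
    (x : Fin n → Bool)
    (wbar : EuclideanSpace ℂ {u // u ∈ t.verts})
    (hwbar : wbar = ((t.pathInternals x).map t.evec).sum + t.evec (t.leafAddr x)) :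
    (∀ v ∈ t.internals, ∀ J, t.queryAt v = some J →
        ⟪t.inputVec W v (x J), wbar⟫_ℂ = 0) ∧
    (∀ u ∈ t.leaves, u ≠ t.leafAddr x → ⟪t.evec [] - t.evec u, wbar⟫_ℂ = 1) ∧
    ⟪t.evec [] - t.evec (t.leafAddr x), wbar⟫_ℂ = 0 ∧
    ∑ e : {v // v ∈ t.internals} × Bool,
        ‖(t.spanMatrix W).conjTranspose.mulVec (fun u => wbar u) e‖ ^ 2
      ≤ W true * ((t.pathColors x).count false : ℝ)
        + W false * ((t.leafAddr x).length : ℝ) :=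
  stmt8_general t hcol W hWblack hWred x wbar hwbar
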